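/- arXiv:2204.10666 — 5 statements merged into one kernel-verified Lean document; each statement's English description precedes it below -/
import Mathlib

section
/- For the path graph P_n with n ≥ 3, the super domination number equals ⌈n/2⌉. -/
open SimpleGraph

/-- A super dominating set: a dominating set `S` such that every vertex `u ∉ S`
has a private "super" dominator `v ∈ S` with `N(v) ∩ (V \ S) = {u}`. -/
def IsSuperDominatingSet {V : Type*} (G : SimpleGraph V) (S : Finset V) : Prop :=
  (∀ u ∉ S, ∃ v ∈ S, G.Adj v u) ∧
  (∀ u ∉ S, ∃ v ∈ S, ∀ w, (G.Adj v w ∧ w ∉ S) ↔ w = u)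

/-- The super domination number: minimum size of a super dominating set. -/
noncomputable def superDominationNumber {V : Type*} (G : SimpleGraph V) : ℕ :=
  sInf {n | ∃ S : Finset V, IsSuperDominatingSet G S ∧ S.card = n}

/-!
Each vertex outside a super dominating set `S` has its own private neighbour in `S`, so
`|V \ S| ≤ |S|` and `γ_sp(G) ≥ ⌈|V|/2⌉`. On the path `0 - 1 - ⋯ - (n-1)` the vertices `4j+1, 4j+2`
super-dominate `4j` and `4j+3`; together with the last vertex when `n ≡ 1 (mod 4)` they form a
super dominating set of size `⌈n/2⌉`.
-/

namespace IsSuperDominatingSet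

variable {V : Type*} {G : SimpleGraph V} {S : Finset V}

lemma of_forall_exists (h : ∀ u ∉ S, ∃ v ∈ S, ∀ w, (G.Adj v w ∧ w ∉ S) ↔ w = u) :
    IsSuperDominatingSet G S :=
  ⟨fun u hu => (h u hu).imp fun _ ⟨hv, hvw⟩ => ⟨hv, ((hvw u).2 rfl).1⟩, h⟩

lemma card_compl_le [Fintype V] [DecidableEq V] (h : IsSuperDominatingSet G S) :
    Sᶜ.card ≤ S.card := by
  refine Finset.card_le_card_of_forall_subsingleton
    (fun u v => ∀ w, (G.Adj v w ∧ w ∉ S) ↔ w = u) (fun u hu => h.2 u (Finset.mem_compl.1 hu)) ?_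
  rintro v - u₁ ⟨-, hu₁⟩ u₂ ⟨-, hu₂⟩
  exact ((hu₁ u₂).1 ((hu₂ u₂).2 rfl)).symm

lemma card_le_two_mul [Fintype V] [DecidableEq V] (h : IsSuperDominatingSet G S) :
    Fintype.card V ≤ 2 * S.card := by
  have := S.card_add_card_compl
  have := h.card_compl_le
  omega

end IsSuperDominatingSet

section superDominationNumber

variable {V : Type*} (G : SimpleGraph V)

lemma superDominationNumber_le {S : Finset V} (h : IsSuperDominatingSet G S) :
    superDominationNumber G ≤ S.card :=
  Nat.sInf_le ⟨S, h, rfl⟩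

lemma exists_isSuperDominatingSet_card_eq [Fintype V] :
    ∃ S, IsSuperDominatingSet G S ∧ S.card = superDominationNumber G :=
  Nat.sInf_mem (s := {n | ∃ S : Finset V, IsSuperDominatingSet G S ∧ S.card = n})
    ⟨_, Finset.univ, .of_forall_exists fun u hu => absurd (Finset.mem_univ u) hu, rfl⟩

lemma card_le_two_mul_superDominationNumber [Fintype V] :
    Fintype.card V ≤ 2 * superDominationNumber G := by
  classical
  obtain ⟨S, hS, hcard⟩ := exists_isSuperDominatingSet_card_eq G
  exact hcard ▸ hS.card_le_two_mul

end superDominationNumber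

def pathSuperDominatingSet (n : ℕ) : Finset (Fin n) :=
  {i | i.val % 4 = 1 ∨ i.val % 4 = 2 ∨ (i.val % 4 = 0 ∧ i.val + 1 = n)}

lemma mem_pathSuperDominatingSet {n : ℕ} {i : Fin n} :
    i ∈ pathSuperDominatingSet n ↔
      i.val % 4 = 1 ∨ i.val % 4 = 2 ∨ (i.val % 4 = 0 ∧ i.val + 1 = n) := by
  simp [pathSuperDominatingSet]

lemma isSuperDominatingSet_pathSuperDominatingSet (n : ℕ) :
    IsSuperDominatingSet (pathGraph n) (pathSuperDominatingSet n) := by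
  refine .of_forall_exists fun u hu => ?_
  rw [mem_pathSuperDominatingSet] at hu
  obtain ⟨v, hv⟩ : ∃ v : Fin n, v.val = if u.val % 4 = 0 then u.val + 1 else u.val - 1 := by
    split_ifs <;> exact ⟨⟨_, by omega⟩, rfl⟩
  refine ⟨v, mem_pathSuperDominatingSet.2 (by split_ifs at hv <;> omega), fun w => ?_⟩
  rw [pathGraph_adj, mem_pathSuperDominatingSet, Fin.ext_iff]
  split_ifs at hv <;> omega

lemma card_pathSuperDominatingSet_le (n : ℕ) :
    (pathSuperDominatingSet n).card ≤ (n + 1) / 2 := by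
  -- halving is injective on the set: `4j` lies in it only as the last vertex, so `4j + 1` does not
  simpa using Finset.card_le_card_of_injOn (fun i : Fin n => i.val / 2)
    (t := Finset.range ((n + 1) / 2)) (fun i _ => Finset.mem_range.2 (by dsimp only; omega))
    (fun i hi j hj hij => by
      rw [Finset.mem_coe, mem_pathSuperDominatingSet] at hi hj
      exact Fin.ext (by simp only at hij; omega))

theorem stmt1_general (n : ℕ) :
    superDominationNumber (SimpleGraph.pathGraph n) = (n + 1) / 2 := by
  have upper := (superDominationNumber_le _ (isSuperDominatingSet_pathSuperDominatingSet n)).trans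
    (card_pathSuperDominatingSet_le n)
  have lower := card_le_two_mul_superDominationNumber (pathGraph n)
  rw [Fintype.card_fin] at lower
  omega

/-- For the path graph `P n` with `n ≥ 3`, `γ_sp(P n) = ⌈n/2⌉`. -/
theorem stmt1 (n : ℕ) (hn : 3 ≤ n) :
    superDominationNumber (SimpleGraph.pathGraph n) = (n + 1) / 2 :=
  stmt1_general n
end

section
/- For the cycle graph C_n, the super domination number is ⌈n/2⌉ if n ≡ 0 or 3 (mod 4), and ⌈(n+1)/2⌉ otherwise. -/
/-!
Sending each `u ∉ S` to a vertex of `S` whose only neighbour outside `S` is `u` is an injection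
`V ∖ S → S`, so `n ≤ 2 |S|`. If `n = 2 |S|` it is a bijection, so in a 2-regular graph every
vertex of `S` has exactly one neighbour outside `S` and hence exactly one inside `S`: `S` spans a
perfect matching and `|S|` is even, which is impossible when `n ≡ 2 (mod 4)`. The vertices
congruent to `0` or `1` mod `4` form a super dominating set of `C_n` attaining these bounds.
-/

open SimpleGraph

open Finset

section General

variable {V : Type*} {G : SimpleGraph V} {S : Finset V}

def IsSoleOutsideNeighbor (G : SimpleGraph V) (S : Finset V) (v u : V) : Prop :=
  ∀ w, (G.Adj v w ∧ w ∉ S) ↔ w = u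

theorem IsSoleOutsideNeighbor.adj {v u : V} (h : IsSoleOutsideNeighbor G S v u) : G.Adj v u :=
  ((h u).2 rfl).1

theorem IsSoleOutsideNeighbor.eq {v u u' : V} (h : IsSoleOutsideNeighbor G S v u)
    (h' : IsSoleOutsideNeighbor G S v u') : u = u' :=
  (h' u).1 ((h u).2 rfl)

theorem isSuperDominatingSet_iff :
    IsSuperDominatingSet G S ↔ ∀ u ∉ S, ∃ v ∈ S, IsSoleOutsideNeighbor G S v u :=
  ⟨And.right, fun h =>
    ⟨fun u hu => (h u hu).imp fun _ ⟨hv, hvu⟩ => ⟨hv, hvu.adj⟩, h⟩⟩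

theorem existsUnique_adj_mem_of_degree_eq_two [DecidableEq V] {v u : V}
    [Fintype (G.neighborSet v)] (hv : G.degree v = 2) (h : IsSoleOutsideNeighbor G S v u) :
    ∃! w, w ∈ S ∧ G.Adj v w := by
  have houtside : {w ∈ G.neighborFinset v | w ∉ S} = {u} := by
    ext w
    simp [← h w, and_comm]
  have hinside : #{w ∈ G.neighborFinset v | w ∈ S} = 1 := by
    have := card_filter_add_card_filter_not (s := G.neighborFinset v) (· ∈ S)
    rw [houtside, card_singleton, card_neighborFinset_eq_degree, hv] at this
    omega
  obtain ⟨w, hw⟩ := card_eq_one.1 hinside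
  have hmem (x : V) : x ∈ S ∧ G.Adj v x ↔ x = w := by
    simpa [and_comm] using Finset.ext_iff.1 hw x
  exact ⟨w, (hmem w).2 rfl, fun x hx => (hmem x).1 hx⟩

theorem even_card_of_forall_existsUnique_adj (h : ∀ v ∈ S, ∃! w, w ∈ S ∧ G.Adj v w) :
    Even #S := by
  have hM : ((⊤ : G.Subgraph).induce (S : Set V)).IsMatching := by
    intro v hv
    simpa [show v ∈ S from hv] using h v hv
  have : Fintype ((⊤ : G.Subgraph).induce (S : Set V)).verts :=
    inferInstanceAs (Fintype (S : Set V))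
  simpa using hM.even_card

namespace IsSuperDominatingSet

variable [Fintype V] [DecidableEq V]

theorem card_compl_le_s2 (hS : IsSuperDominatingSet G S) : #Sᶜ ≤ #S :=
  card_le_card_of_forall_subsingleton (fun u v => IsSoleOutsideNeighbor G S v u)
    (fun u hu => hS.2 u (mem_compl.1 hu)) fun _ _ _ hu _ hu' => hu.2.eq hu'.2

theorem exists_isSoleOutsideNeighbor_of_card_le (hS : IsSuperDominatingSet G S)
    (hcard : #S ≤ #Sᶜ) {v : V} (hv : v ∈ S) : ∃ u, IsSoleOutsideNeighbor G S v u := by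
  choose f hfS hf using hS.2
  have hinj (u u' : V) (hu : u ∈ Sᶜ) (hu' : u' ∈ Sᶜ)
      (huu' : f u (mem_compl.1 hu) = f u' (mem_compl.1 hu')) : u = u' :=
    IsSoleOutsideNeighbor.eq (G := G) (huu' ▸ hf u _) (hf u' _)
  obtain ⟨u, hu, rfl⟩ := surj_on_of_inj_on_of_card_le (fun u hu => f u (mem_compl.1 hu))
    (fun u hu => hfS u _) hinj hcard v hv
  exact ⟨u, hf u _⟩

theorem even_card_of_card_le [DecidableRel G.Adj] (hG : G.IsRegularOfDegree 2)
    (hS : IsSuperDominatingSet G S) (hcard : #S ≤ #Sᶜ) : Even #S :=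
  even_card_of_forall_existsUnique_adj fun v hv =>
    let ⟨_, hu⟩ := hS.exists_isSoleOutsideNeighbor_of_card_le hcard hv
    existsUnique_adj_mem_of_degree_eq_two (hG v) hu

end IsSuperDominatingSet

end General

theorem card_filter_range_mod_four_lt_two (n : ℕ) :
    #{i ∈ range n | i % 4 < 2} = 2 * (n / 4) + min (n % 4) 2 := by
  induction n with
  | zero => rfl
  | succ n ih =>
    rw [range_add_one, filter_insert]
    split_ifs
    · rw [card_insert_of_notMem (by simp), ih]
      omega
    · rw [ih]
      omega

def cycleSuperDominatingSet (n : ℕ) : Finset (Fin n) := {i | i.val % 4 < 2}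

theorem mem_cycleSuperDominatingSet {n : ℕ} {i : Fin n} :
    i ∈ cycleSuperDominatingSet n ↔ i.val % 4 < 2 := by
  simp [cycleSuperDominatingSet]

theorem card_cycleSuperDominatingSet (n : ℕ) :
    #(cycleSuperDominatingSet n) = 2 * (n / 4) + min (n % 4) 2 := by
  rw [← card_filter_range_mod_four_lt_two, cycleSuperDominatingSet, card_filter, card_filter,
    Fin.sum_univ_eq_sum_range (fun i => if i % 4 < 2 then 1 else 0)]

section CycleGraph

variable {n : ℕ} {S : Finset (Fin (n + 2))} {v : Fin (n + 2)}

theorem cycleGraph_adj_iff_eq {w : Fin (n + 2)} :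
    (cycleGraph (n + 2)).Adj v w ↔ w = v - 1 ∨ w = v + 1 := by
  rw [← mem_neighborSet, cycleGraph_neighborSet]
  rfl

theorem isSoleOutsideNeighbor_add_one (hprev : v - 1 ∈ S) (hnext : v + 1 ∉ S) :
    IsSoleOutsideNeighbor (cycleGraph (n + 2)) S v (v + 1) := by
  intro w
  rw [cycleGraph_adj_iff_eq]
  constructor
  · rintro ⟨rfl | rfl, hw⟩
    · exact absurd hprev hw
    · rfl
  · rintro rfl
    exact ⟨Or.inr rfl, hnext⟩

theorem isSoleOutsideNeighbor_sub_one (hnext : v + 1 ∈ S) (hprev : v - 1 ∉ S) :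
    IsSoleOutsideNeighbor (cycleGraph (n + 2)) S v (v - 1) := by
  intro w
  rw [cycleGraph_adj_iff_eq]
  constructor
  · rintro ⟨rfl | rfl, hw⟩
    · rfl
    · exact absurd hnext hw
  · rintro rfl
    exact ⟨Or.inl rfl, hprev⟩

/- A vertex `u ≡ 2 (mod 4)` is the sole outside neighbour of `u - 1`, and `u ≡ 3` that of
`u + 1`; this survives the wrap-around at `n`, where `u + 1 = 0` and `u + 2 = 1`. -/
theorem isSuperDominatingSet_cycleSuperDominatingSet :
    IsSuperDominatingSet (cycleGraph (n + 2)) (cycleSuperDominatingSet (n + 2)) := by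
  rw [isSuperDominatingSet_iff]
  intro u hu
  rw [mem_cycleSuperDominatingSet] at hu
  have hlt := u.isLt
  by_cases hu2 : u.val % 4 = 2
  · have hprev : u - 1 - 1 ∈ cycleSuperDominatingSet (n + 2) := by
      simp only [mem_cycleSuperDominatingSet, Fin.coe_sub_one, Fin.ext_iff, Fin.val_zero]
      split_ifs <;> omega
    have hsole := isSoleOutsideNeighbor_add_one hprev
      (by rwa [sub_add_cancel, mem_cycleSuperDominatingSet])
    rw [sub_add_cancel] at hsole
    refine ⟨u - 1, ?_, hsole⟩
    simp only [mem_cycleSuperDominatingSet, Fin.coe_sub_one, Fin.ext_iff, Fin.val_zero]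
    split_ifs <;> omega
  · have hnext : u + 1 + 1 ∈ cycleSuperDominatingSet (n + 2) := by
      simp only [mem_cycleSuperDominatingSet, Fin.val_add_one, Fin.ext_iff, Fin.val_last]
      split_ifs <;> omega
    have hsole := isSoleOutsideNeighbor_sub_one hnext
      (by rwa [add_sub_cancel_right, mem_cycleSuperDominatingSet])
    rw [add_sub_cancel_right] at hsole
    refine ⟨u + 1, ?_, hsole⟩
    simp only [mem_cycleSuperDominatingSet, Fin.val_add_one, Fin.ext_iff, Fin.val_last]
    split_ifs <;> omega

end CycleGraph

theorem IsSuperDominatingSet.le_card_of_cycleGraph {n : ℕ} {S : Finset (Fin (n + 3))}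
    (hS : IsSuperDominatingSet (cycleGraph (n + 3)) S) :
    2 * ((n + 3) / 4) + min ((n + 3) % 4) 2 ≤ #S := by
  have hcompl := hS.card_compl_le_s2
  have heven := hS.even_card_of_card_le fun _ => cycleGraph_degree_three_le
  rw [card_compl, Fintype.card_fin] at hcompl heven
  by_cases hcard : #S ≤ n + 3 - #S
  · obtain ⟨r, hr⟩ := heven hcard
    omega
  · omega

theorem superDominationNumber_cycleGraph {n : ℕ} (hn : 3 ≤ n) :
    superDominationNumber (cycleGraph n) = 2 * (n / 4) + min (n % 4) 2 := by
  obtain ⟨n, rfl⟩ : ∃ m, n = m + 3 := ⟨n - 3, by omega⟩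
  refine IsLeast.csInf_eq ⟨⟨cycleSuperDominatingSet (n + 3),
    isSuperDominatingSet_cycleSuperDominatingSet (n := n + 1),
    card_cycleSuperDominatingSet _⟩, ?_⟩
  rintro _ ⟨S, hS, rfl⟩
  exact hS.le_card_of_cycleGraph

/-- For the cycle graph `C n`, `γ_sp(C n) = ⌈n/2⌉` if `n ≡ 0, 3 (mod 4)` and
`γ_sp(C n) = ⌈(n+1)/2⌉` otherwise. -/
theorem stmt2 (n : ℕ) (hn : 3 ≤ n) :
    ((n % 4 = 0 ∨ n % 4 = 3) →
      superDominationNumber (SimpleGraph.cycleGraph n) = (n + 1) / 2) ∧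
    (¬(n % 4 = 0 ∨ n % 4 = 3) →
      superDominationNumber (SimpleGraph.cycleGraph n) = (n + 2) / 2) := by
  rw [superDominationNumber_cycleGraph hn]
  omega
end

section
/- The super domination number of the friendship graph F_n equals n+1. -/
/-! Each vertex outside a super dominating set `S` has a private neighbour in `S` whose only
neighbour outside `S` is that vertex, so `|V \ S| ≤ |S|` and `|S| ≥ ⌈|V| / 2⌉ = n + 1` for `F n`.
Conversely the centre together with one vertex of each triangle is super dominating: the other
vertex of a triangle is the only neighbour outside the set of its partner. -/

open SimpleGraph

/-- The friendship graph `F n`: `n` triangles sharing the common vertex `0`.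
For `1 ≤ i`, vertices `2k+1` and `2k+2` form the `k`-th triangle with the centre. -/
def friendshipGraph (n : ℕ) : SimpleGraph (Fin (2 * n + 1)) :=
  SimpleGraph.fromRel (fun i j =>
    i.val = 0 ∨ j.val = 0 ∨ (i.val + 1) / 2 = (j.val + 1) / 2)

lemma IsSuperDominatingSet.card_compl_le_s5 {V : Type*} [Fintype V] [DecidableEq V]
    {G : SimpleGraph V} {S : Finset V} (hS : IsSuperDominatingSet G S) :
    Sᶜ.card ≤ S.card := by
  refine Finset.card_le_card_of_forall_subsingleton
    (fun u v => ∀ w, (G.Adj v w ∧ w ∉ S) ↔ w = u) (fun u hu => hS.2 u (Finset.mem_compl.1 hu)) ?_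
  rintro v - a ⟨-, ha⟩ b ⟨-, hb⟩
  exact (ha b).1 ((hb b).2 rfl) |>.symm

lemma IsSuperDominatingSet.card_le_two_mul_card {V : Type*} [Fintype V] [DecidableEq V]
    {G : SimpleGraph V} {S : Finset V} (hS : IsSuperDominatingSet G S) :
    Fintype.card V ≤ 2 * S.card := by
  have := Finset.card_compl_add_card S
  have := hS.card_compl_le_s5
  omega

lemma friendshipGraph_adj {n : ℕ} {a b : Fin (2 * n + 1)} :
    (friendshipGraph n).Adj a b ↔
      a.val ≠ b.val ∧ (a.val = 0 ∨ b.val = 0 ∨ (a.val + 1) / 2 = (b.val + 1) / 2) := by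
  simp only [friendshipGraph, fromRel_adj, ne_eq, Fin.ext_iff]
  omega

def friendshipSuperDominatingSet (n : ℕ) : Finset (Fin (2 * n + 1)) :=
  insert 0 (Finset.univ.image fun k : Fin n => ⟨2 * k + 1, by omega⟩)

lemma card_friendshipSuperDominatingSet (n : ℕ) :
    (friendshipSuperDominatingSet n).card = n + 1 := by
  rw [friendshipSuperDominatingSet, Finset.card_insert_of_notMem, Finset.card_image_of_injective]
  · simp
  · intro a b h
    simp only [Fin.mk.injEq] at h
    omega
  · simp [Fin.ext_iff]

lemma mem_friendshipSuperDominatingSet {n : ℕ} {v : Fin (2 * n + 1)} :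
    v ∈ friendshipSuperDominatingSet n ↔ v.val = 0 ∨ v.val % 2 = 1 := by
  simp only [friendshipSuperDominatingSet, Finset.mem_insert, Finset.mem_image, Finset.mem_univ,
    true_and, Fin.ext_iff, Fin.val_zero]
  constructor
  · rintro (h | ⟨k, h⟩) <;> omega
  · rintro (h | h)
    · exact .inl h
    · exact .inr ⟨⟨v / 2, by omega⟩, by simp only; omega⟩

lemma isSuperDominatingSet_friendshipSuperDominatingSet (n : ℕ) :
    IsSuperDominatingSet (friendshipGraph n) (friendshipSuperDominatingSet n) := by
  simp only [IsSuperDominatingSet, mem_friendshipSuperDominatingSet, not_or]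
  constructor
  · rintro u ⟨hu0, -⟩
    exact ⟨0, .inl rfl, friendshipGraph_adj.2 ⟨by simp only [Fin.val_zero]; omega, .inl rfl⟩⟩
  · rintro u ⟨hu0, hu1⟩
    refine ⟨⟨u - 1, by omega⟩, .inr (by simp only; omega), fun w => ?_⟩
    simp only [friendshipGraph_adj, Fin.ext_iff]
    omega

/-- The super domination number of the friendship graph `F n` equals `n + 1`. -/
theorem stmt5 (n : ℕ) :
    superDominationNumber (friendshipGraph n) = n + 1 := by
  refine IsLeast.csInf_eq ⟨⟨_, isSuperDominatingSet_friendshipSuperDominatingSet n,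
    card_friendshipSuperDominatingSet n⟩, ?_⟩
  rintro _ ⟨S, hS, rfl⟩
  have := hS.card_le_two_mul_card
  rw [Fintype.card_fin] at this
  omega
end

section
/- For the Dutch windmill graph D_n^{(m)} with m ≥ 5 odd, the super domination number equals n(m−1)/2 + 1. -/
open SimpleGraph

/-- The Dutch windmill graph `D_n^{(m)}`: `n` copies of the cycle `C_m` sharing a common
vertex (the `Sum.inl` vertex).  The `i`-th copy has path vertices `(i, 0), …, (i, m-2)`,
with the centre adjacent to the two endpoints. -/
def dutchWindmill (n m : ℕ) : SimpleGraph (Unit ⊕ Fin n × Fin (m - 1)) :=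
  SimpleGraph.fromRel (fun a b =>
    match a, b with
    | Sum.inl _, Sum.inr (_, k) => k.val = 0 ∨ k.val = m - 2
    | Sum.inr (i, k), Sum.inr (j, l) => i = j ∧ l.val = k.val + 1
    | _, _ => False)

open Finset

-- counting lemma
lemma count_aux : ∀ J : ℕ, ((Finset.range (2*J)).filter (fun k => k%4=1 ∨ k%4=2)).card = J := by
  intro J
  induction J with
  | zero => simp
  | succ J ih =>
    have h1 : 2*(J+1) = (2*J+1)+1 := by ring
    rw [h1, Finset.range_add_one, Finset.range_add_one, Finset.filter_insert, Finset.filter_insert]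
    have hm1 : (2*J+1) ∉ Finset.range (2*J) := by simp
    have hm2 : (2*J) ∉ Finset.range (2*J) := by simp
    rcases Nat.even_or_odd J with ⟨t, ht⟩ | ⟨t, ht⟩
    · have c1 : (2*J+1)%4 = 1 ∨ (2*J+1)%4 = 2 := by omega
      have c2 : ¬((2*J)%4 = 1 ∨ (2*J)%4 = 2) := by omega
      rw [if_pos c1, if_neg c2, Finset.card_insert_of_notMem (by simp), ih]
    · have c1 : ¬((2*J+1)%4 = 1 ∨ (2*J+1)%4 = 2) := by omega
      have c2 : ((2*J)%4 = 1 ∨ (2*J)%4 = 2) := by omega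
      rw [if_neg c1, if_pos c2, Finset.card_insert_of_notMem (by simp), ih]

lemma count_fin (N : ℕ) (hN : N % 2 = 0) :
    ((Finset.univ : Finset (Fin N)).filter (fun k => k.val%4=1 ∨ k.val%4=2)).card = N/2 := by
  obtain ⟨J, hJ⟩ : ∃ J, N = 2*J := ⟨N/2, by omega⟩
  have h := count_aux J
  have this1 : (Finset.range N).filter (fun k => k%4=1 ∨ k%4=2)
      = ((Finset.univ : Finset (Fin N)).map Fin.valEmbedding).filter (fun k => k%4=1 ∨ k%4=2) := by
    rw [Fin.map_valEmbedding_univ, Nat.Iio_eq_range]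
  rw [Finset.filter_map] at this1
  rw [← hJ] at h
  rw [this1, Finset.card_map] at h
  have h2 : #(filter (fun k : Fin N => k.val%4=1 ∨ k.val%4=2) univ) = J := by
    rw [← h]; apply Finset.card_nbij (fun x => x) <;> intro x <;> simp [Set.InjOn, Function.comp]
  omega

section main
variable (n m : ℕ)

-- adjacency characterizations
lemma wm_adj_inr_inr (i j : Fin n) (k l : Fin (m-1)) :
    (dutchWindmill n m).Adj (Sum.inr (i,k)) (Sum.inr (j,l)) ↔
      i = j ∧ (l.val = k.val + 1 ∨ k.val = l.val + 1) := by
  simp only [dutchWindmill, fromRel_adj]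
  constructor
  · rintro ⟨hne, h | h⟩
    · exact ⟨h.1, Or.inl h.2⟩
    · exact ⟨h.1.symm, Or.inr h.2⟩
  · rintro ⟨rfl, h | h⟩
    · exact ⟨by simp [Fin.ext_iff]; omega, Or.inl ⟨rfl, h⟩⟩
    · exact ⟨by simp [Fin.ext_iff]; omega, Or.inr ⟨rfl, h⟩⟩

lemma wm_adj_inr_inl (i : Fin n) (k : Fin (m-1)) (x : Unit) :
    (dutchWindmill n m).Adj (Sum.inr (i,k)) (Sum.inl x) ↔ (k.val = 0 ∨ k.val = m - 2) := by
  simp only [dutchWindmill, fromRel_adj]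
  constructor
  · rintro ⟨hne, h | h⟩
    · exact h.elim
    · exact h
  · rintro h
    exact ⟨by simp, Or.inr h⟩

end main

section constr
variable (n m : ℕ)

def wmS : Finset (Unit ⊕ Fin n × Fin (m-1)) :=
  (Finset.univ : Finset Unit).disjSum
    ((Finset.univ : Finset (Fin n)) ×ˢ ((Finset.univ : Finset (Fin (m-1))).filter
      (fun k => k.val % 4 = 1 ∨ k.val % 4 = 2)))

lemma mem_wmS_inl (x : Unit) : Sum.inl x ∈ wmS n m := by
  simp [wmS]

lemma mem_wmS_inr (i : Fin n) (k : Fin (m-1)) :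
    Sum.inr (i,k) ∈ wmS n m ↔ (k.val % 4 = 1 ∨ k.val % 4 = 2) := by
  simp [wmS]

lemma wmS_super (hm : 5 ≤ m) (hodd : Odd m) :
    IsSuperDominatingSet (dutchWindmill n m) (wmS n m) := by
  have hN4 : 4 ≤ m - 1 := by omega
  have hNe : (m - 1) % 2 = 0 := by obtain ⟨t, ht⟩ := hodd; omega
  -- the private dominator
  have key : ∀ u ∉ wmS n m, ∃ v ∈ wmS n m, ((dutchWindmill n m).Adj v u ∧
      ∀ w, ((dutchWindmill n m).Adj v w ∧ w ∉ wmS n m) ↔ w = u) := by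
    rintro (x | ⟨i, k⟩) hu
    · exact absurd (mem_wmS_inl n m x) hu
    · rw [mem_wmS_inr] at hu
      push_neg at hu
      have hk : k.val < m - 1 := k.isLt
      have hk4 : k.val % 4 = 0 ∨ k.val % 4 = 3 := by omega
      rcases hk4 with h0 | h3
      · -- v = (i, k+1)
        have hlt : k.val + 1 < m - 1 := by omega
        refine ⟨Sum.inr (i, ⟨k.val + 1, hlt⟩), ?_, ?_, ?_⟩
        · rw [mem_wmS_inr]; simp only [Fin.val_mk]; omega
        · rw [wm_adj_inr_inr]; exact ⟨rfl, Or.inr rfl⟩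
        · rintro (x | ⟨j, l⟩)
          · simp only [iff_false_intro (by simp : (Sum.inl x : Unit ⊕ Fin n × Fin (m-1)) ≠ Sum.inr (i,k))]
            simp [mem_wmS_inl]
          · rw [wm_adj_inr_inr, mem_wmS_inr]
            constructor
            · rintro ⟨⟨rfl, hc | hc⟩, hns⟩
              · simp only at hc
                exfalso; apply hns; left; omega
              · simp only at hc
                have : l = k := by apply Fin.ext; omega
                rw [this]
            · rintro heq
              simp only [Sum.inr.injEq, Prod.mk.injEq] at heq
              obtain ⟨rfl, rfl⟩ := heq
              refine ⟨⟨rfl, Or.inr (by simp only [Fin.val_mk])⟩, by omega⟩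
      · -- v = (i, k-1)
        have hlt : k.val - 1 < m - 1 := by omega
        refine ⟨Sum.inr (i, ⟨k.val - 1, hlt⟩), ?_, ?_, ?_⟩
        · rw [mem_wmS_inr]; simp only [Fin.val_mk]; omega
        · rw [wm_adj_inr_inr]; exact ⟨rfl, Or.inl (by simp; omega)⟩
        · rintro (x | ⟨j, l⟩)
          · simp only [iff_false_intro (by simp : (Sum.inl x : Unit ⊕ Fin n × Fin (m-1)) ≠ Sum.inr (i,k))]
            simp [mem_wmS_inl]
          · rw [wm_adj_inr_inr, mem_wmS_inr]
            constructor
            · rintro ⟨⟨rfl, hc | hc⟩, hns⟩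
              · simp only at hc
                have : l = k := by apply Fin.ext; omega
                rw [this]
              · simp only at hc
                exfalso; apply hns; right; omega
            · rintro heq
              simp only [Sum.inr.injEq, Prod.mk.injEq] at heq
              obtain ⟨rfl, rfl⟩ := heq
              refine ⟨⟨rfl, Or.inl (by simp only [Fin.val_mk]; omega)⟩, by omega⟩
  constructor
  · intro u hu
    obtain ⟨v, hv, hadj, _⟩ := key u hu
    exact ⟨v, hv, hadj⟩
  · intro u hu
    obtain ⟨v, hv, _, hiff⟩ := key u hu
    exact ⟨v, hv, hiff⟩

end constr

-- cardinality of wmS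
lemma wmS_card (n m : ℕ) (hNe : (m-1) % 2 = 0) :
    (wmS n m).card = n * ((m-1)/2) + 1 := by
  rw [wmS, Finset.card_disjSum, Finset.card_product]
  simp only [Finset.card_univ, Fintype.card_unit, Fintype.card_fin]
  rw [count_fin (m-1) hNe]
  omega

-- lower bound: any super dominating set has card ≥ half the vertices (strictly more if odd)
lemma lower_bound {V : Type*} [Fintype V] [DecidableEq V] (G : SimpleGraph V) (S : Finset V)
    (hS : IsSuperDominatingSet G S) : Fintype.card V ≤ 2 * S.card := by
  classical
  have h2 := hS.2
  -- injective map from Sᶜ into S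
  by_contra hlt
  push_neg at hlt
  have hcc : S.card < Sᶜ.card := by
    have := Finset.card_compl S
    omega
  have hmap : ∀ u ∈ Sᶜ, (if h : u ∉ S then (h2 u h).choose else u) ∈ S := by
    intro u hu
    rw [Finset.mem_compl] at hu
    rw [dif_pos hu]
    exact (h2 u hu).choose_spec.1
  obtain ⟨u, hu, u', hu', hne, heq⟩ :=
    Finset.exists_ne_map_eq_of_card_lt_of_maps_to hcc hmap
  rw [Finset.mem_compl] at hu hu'
  rw [dif_pos hu, dif_pos hu'] at heq
  have p1 := (h2 u hu).choose_spec.2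
  have p2 := (h2 u' hu').choose_spec.2
  have hadj : G.Adj (h2 u hu).choose u' ∧ u' ∉ S := by
    rw [heq]
    exact (p2 u').mpr rfl
  exact hne ((p1 u').mp hadj).symm

/-- For the Dutch windmill graph `D_n^{(m)}` with `m ≥ 5` odd,
`γ_sp(D_n^{(m)}) = n(m-1)/2 + 1`. -/
theorem stmt7 (n m : ℕ) (hm : 5 ≤ m) (hodd : Odd m) :
    superDominationNumber (dutchWindmill n m) = n * ((m - 1) / 2) + 1 := by
  have hNe : (m - 1) % 2 = 0 := by obtain ⟨t, ht⟩ := hodd; omega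
  have hmem : n * ((m - 1) / 2) + 1 ∈
      {c | ∃ S : Finset (Unit ⊕ Fin n × Fin (m-1)),
        IsSuperDominatingSet (dutchWindmill n m) S ∧ S.card = c} :=
    ⟨wmS n m, wmS_super n m hm hodd, wmS_card n m hNe⟩
  refine le_antisymm (Nat.sInf_le hmem) (le_csInf ⟨_, hmem⟩ ?_)
  rintro c ⟨S, hS, rfl⟩
  have hlb := lower_bound (dutchWindmill n m) S hS
  have hcard : Fintype.card (Unit ⊕ Fin n × Fin (m-1)) = 1 + n * (m-1) := by
    simp [Fintype.card_sum, Fintype.card_prod]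
  have hdiv : m - 1 = 2 * ((m-1)/2) := by omega
  have hmul : n * (m - 1) = 2 * (n * ((m-1)/2)) := by
    conv_lhs => rw [hdiv]
    ring
  omega
end

section
/- For any graph G = (V,E) and any edge e ∈ E, the super domination number satisfies γ_sp(G) − 1 ≤ γ_sp(G − e) ≤ γ_sp(G) + 1. -/
open SimpleGraph

lemma transfer_mem {V : Type*} {G₁ G₂ : SimpleGraph V} {x y : V} {S : Finset V}
    (hx : x ∈ S) (hy : y ∈ S)
    (h12 : ∀ a b, G₁.Adj a b → G₂.Adj a b ∨ s(a,b) = s(x,y))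
    (h21 : ∀ a b, G₂.Adj a b → G₁.Adj a b ∨ s(a,b) = s(x,y))
    (hS : IsSuperDominatingSet G₁ S) : IsSuperDominatingSet G₂ S := by
  obtain ⟨hdom, hsup⟩ := hS
  constructor
  · intro u hu
    obtain ⟨v, hv, hadj⟩ := hdom u hu
    refine ⟨v, hv, ?_⟩
    rcases h12 v u hadj with h | h
    · exact h
    · rw [Sym2.eq_iff] at h
      rcases h with ⟨_, rfl⟩ | ⟨_, rfl⟩ <;> exact absurd (by assumption) hu
  · intro u hu
    obtain ⟨v, hv, hiff⟩ := hsup u hu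
    refine ⟨v, hv, fun w => ⟨?_, ?_⟩⟩
    · rintro ⟨hadj, hw⟩
      rcases h21 v w hadj with h | h
      · exact (hiff w).1 ⟨h, hw⟩
      · rw [Sym2.eq_iff] at h
        rcases h with ⟨rfl, rfl⟩ | ⟨rfl, rfl⟩ <;> exact absurd (by assumption) hw
    · rintro rfl
      have h1 := (hiff _).2 rfl
      refine ⟨?_, h1.2⟩
      rcases h12 v _ h1.1 with h | h
      · exact h
      · rw [Sym2.eq_iff] at h
        rcases h with ⟨_, h2⟩ | ⟨_, h2⟩
        · exact absurd (show _ ∈ S by rw [h2]; exact hy) h1.2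
        · exact absurd (show _ ∈ S by rw [h2]; exact hx) h1.2

lemma transfer_not_mem {V : Type*} [DecidableEq V] {G₁ G₂ : SimpleGraph V} {x y : V}
    {S : Finset V} (hx : x ∉ S)
    (h12 : ∀ a b, G₁.Adj a b → G₂.Adj a b ∨ s(a,b) = s(x,y))
    (h21 : ∀ a b, G₂.Adj a b → G₁.Adj a b ∨ s(a,b) = s(x,y))
    (hS : IsSuperDominatingSet G₁ S) : IsSuperDominatingSet G₂ (insert x S) := by
  obtain ⟨hdom, hsup⟩ := hS
  constructor
  · intro u hu
    have huS : u ∉ S := fun h => hu (Finset.mem_insert_of_mem h)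
    have hux : u ≠ x := fun h => hu (h ▸ Finset.mem_insert_self x S)
    obtain ⟨v, hv, hadj⟩ := hdom u huS
    refine ⟨v, Finset.mem_insert_of_mem hv, ?_⟩
    rcases h12 v u hadj with h | h
    · exact h
    · rw [Sym2.eq_iff] at h
      rcases h with ⟨rfl, rfl⟩ | ⟨rfl, rfl⟩
      · exact absurd hv hx
      · exact absurd rfl hux
  · intro u hu
    have huS : u ∉ S := fun h => hu (Finset.mem_insert_of_mem h)
    have hux : u ≠ x := fun h => hu (h ▸ Finset.mem_insert_self x S)
    obtain ⟨v, hv, hiff⟩ := hsup u huS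
    have hvx : v ≠ x := fun h => hx (h ▸ hv)
    refine ⟨v, Finset.mem_insert_of_mem hv, fun w => ⟨?_, ?_⟩⟩
    · rintro ⟨hadj, hw⟩
      have hwS : w ∉ S := fun h => hw (Finset.mem_insert_of_mem h)
      have hwx : w ≠ x := fun h => hw (h ▸ Finset.mem_insert_self x S)
      rcases h21 v w hadj with h | h
      · exact (hiff w).1 ⟨h, hwS⟩
      · rw [Sym2.eq_iff] at h
        rcases h with ⟨rfl, rfl⟩ | ⟨rfl, rfl⟩
        · exact absurd rfl hvx
        · exact absurd rfl hwx
    · rintro rfl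
      have h1 := (hiff _).2 rfl
      refine ⟨?_, hu⟩
      rcases h12 v _ h1.1 with h | h
      · exact h
      · rw [Sym2.eq_iff] at h
        rcases h with ⟨h2, _⟩ | ⟨_, h2⟩
        · exact absurd (show v ∈ S from hv) (h2 ▸ hx)
        · exact absurd h2 hux

lemma transfer_exists {V : Type*} {G₁ G₂ : SimpleGraph V} {x y : V}
    {S : Finset V}
    (h12 : ∀ a b, G₁.Adj a b → G₂.Adj a b ∨ s(a,b) = s(x,y))
    (h21 : ∀ a b, G₂.Adj a b → G₁.Adj a b ∨ s(a,b) = s(x,y))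
    (hS : IsSuperDominatingSet G₁ S) :
    ∃ T : Finset V, IsSuperDominatingSet G₂ T ∧ T.card ≤ S.card + 1 := by
  classical
  by_cases hx : x ∈ S
  · by_cases hy : y ∈ S
    · exact ⟨S, transfer_mem hx hy h12 h21 hS, Nat.le_succ _⟩
    · have h12' : ∀ a b, G₁.Adj a b → G₂.Adj a b ∨ s(a,b) = s(y,x) := by
        exact fun a b h => (h12 a b h).imp id (fun h' => h'.trans (Sym2.eq_swap))
      have h21' : ∀ a b, G₂.Adj a b → G₁.Adj a b ∨ s(a,b) = s(y,x) := by
        exact fun a b h => (h21 a b h).imp id (fun h' => h'.trans (Sym2.eq_swap))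
      exact ⟨insert y S, transfer_not_mem hy h12' h21' hS,
        (Finset.card_insert_le _ _)⟩
  · exact ⟨insert x S, transfer_not_mem hx h12 h21 hS,
      (Finset.card_insert_le _ _)⟩

lemma univ_superDom {V : Type*} [Fintype V] (G : SimpleGraph V) :
    IsSuperDominatingSet G Finset.univ :=
  ⟨fun u hu => absurd (Finset.mem_univ u) hu,
   fun u hu => absurd (Finset.mem_univ u) hu⟩

lemma sdn_le {V : Type*} {G : SimpleGraph V} {S : Finset V}
    (hS : IsSuperDominatingSet G S) : superDominationNumber G ≤ S.card :=
  Nat.sInf_le ⟨S, hS, rfl⟩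

lemma sdn_attained {V : Type*} [Fintype V] (G : SimpleGraph V) :
    ∃ S : Finset V, IsSuperDominatingSet G S ∧ S.card = superDominationNumber G := by
  have : superDominationNumber G ∈
      {n | ∃ S : Finset V, IsSuperDominatingSet G S ∧ S.card = n} :=
    Nat.sInf_mem ⟨Finset.univ.card, Finset.univ, univ_superDom G, rfl⟩
  exact this

/-- For any graph `G` and edge `e` of `G`, `γ_sp(G) - 1 ≤ γ_sp(G - e) ≤ γ_sp(G) + 1`. -/
theorem stmt9 {V : Type*} [Fintype V] (G : SimpleGraph V) (e : Sym2 V)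
    (he : e ∈ G.edgeSet) :
    superDominationNumber G - 1 ≤ superDominationNumber (G.deleteEdges {e}) ∧
    superDominationNumber (G.deleteEdges {e}) ≤ superDominationNumber G + 1 := by
  induction e using Sym2.ind with
  | _ x y =>
  rw [mem_edgeSet] at he
  set H := G.deleteEdges {s(x,y)} with hH
  have h12 : ∀ a b, H.Adj a b → G.Adj a b ∨ s(a,b) = s(x,y) := by
    intro a b h
    rw [hH, deleteEdges_adj] at h
    exact Or.inl h.1
  have h21 : ∀ a b, G.Adj a b → H.Adj a b ∨ s(a,b) = s(x,y) := by
    intro a b h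
    by_cases hab : s(a,b) = s(x,y)
    · exact Or.inr hab
    · exact Or.inl (by rw [hH, deleteEdges_adj]; exact ⟨h, by simpa using hab⟩)
  constructor
  · obtain ⟨S, hS, hcard⟩ := sdn_attained H
    obtain ⟨T, hT, hTc⟩ := transfer_exists h12 h21 hS
    have := sdn_le hT
    omega
  · obtain ⟨S, hS, hcard⟩ := sdn_attained G
    obtain ⟨T, hT, hTc⟩ := transfer_exists h21 h12 hS
    have := sdn_le hT
    omega
end
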